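/- arXiv:0910.2861 — 3 statements merged into one kernel-verified Lean document; each statement's English description precedes it below -/
import Mathlib

section
/- Let n ≥ 1 and let Θ = Θ(z, z̄, w̄) be holomorphic near 0 in ℂⁿ×ℂⁿ×ℂ with Θ = −w̄ + O(2), and suppose that Θ together with its conjugate function Θ̄ satisfies the pair of identities w̄ ≡ Θ̄(z̄, z, Θ(z, z̄, w̄)) and w ≡ Θ(z, z̄, Θ̄(z̄, z, w)) near the origin. Then the two zero-sets {(z,w) : 0 = −w + Θ(z, z̄, w̄)} and {(z,w) : 0 = −w̄ + Θ̄(z̄, z, w)} coincide in a neighborhood of 0 in ℂ^{n+1}, and this common set is a one-codimensional real analytic hypersurface through 0: there exists a real-valued real analytic function φ(x,y,v) near 0 ∈ ℝⁿ×ℝⁿ×ℝ with φ(0) = 0 and dφ(0) = 0 such that, near 0, the set equals {(z,w) = (x+iy, u+iv) : u = φ(x,y,v)}. -/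
open Topology Filter Set

noncomputable section

/-- The space ℂⁿ × ℂⁿ × ℂ of variables (z, z̄, w̄) = (z, t̄). -/
abbrev Pt (n : ℕ) := (Fin n → ℂ) × (Fin n → ℂ) × ℂ

/-- Partial derivative ∂/∂z_k. -/
def pdZ {n : ℕ} (k : Fin n) (f : Pt n → ℂ) : Pt n → ℂ :=
  fun p => fderiv ℂ f p (Pi.single k 1, 0, 0)

/-- The direction in `Pt n` corresponding to the variable t̄_μ
(the first n of these are the z̄_j, the last one is w̄). -/
def tdir (n : ℕ) (μ : Fin (n + 1)) : Pt n :=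
  if h : (μ : ℕ) < n then (0, Pi.single ⟨μ, h⟩ 1, 0) else (0, 0, 1)

/-- Partial derivative ∂/∂t̄_μ. -/
def pdT {n : ℕ} (μ : Fin (n + 1)) (f : Pt n → ℂ) : Pt n → ℂ :=
  fun p => fderiv ℂ f p (tdir n μ)

/-- The (n+1)×(n+1) matrix whose first row is (Θ_{t̄_μ})_μ and whose (1+k)-th row
is (Θ_{z_k t̄_μ})_μ; its determinant is Δ. -/
def DeltaMat {n : ℕ} (Θ : Pt n → ℂ) (p : Pt n) : Matrix (Fin (n + 1)) (Fin (n + 1)) ℂ :=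
  Matrix.of fun i μ =>
    Fin.cons (α := fun _ => ℂ) (pdT μ Θ p) (fun k : Fin n => pdT μ (pdZ k Θ) p) i

/-- The Jacobian-like determinant Δ. -/
def Delta {n : ℕ} (Θ : Pt n → ℂ) (p : Pt n) : ℂ := (DeltaMat Θ p).det

/-- Δ^μ_{[0_{1+ℓ}]} : the determinant Δ with its μ-th column replaced by the
standard basis column with 1 in the (1+ℓ)-th entry. -/
def DeltaCol {n : ℕ} (Θ : Pt n → ℂ) (ℓ : Fin n) (μ : Fin (n + 1)) (p : Pt n) : ℂ :=
  ((DeltaMat Θ p).updateCol μ (Pi.single ℓ.succ 1)).det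

/-- Δ^τ_{[t̄^μ t̄^ν]} : the determinant Δ with its τ-th column replaced by
(Θ_{t̄_μ t̄_ν}, Θ_{z_1 t̄_μ t̄_ν}, …, Θ_{z_n t̄_μ t̄_ν})ᵀ. -/
def DeltaTT {n : ℕ} (Θ : Pt n → ℂ) (μ ν τ : Fin (n + 1)) (p : Pt n) : ℂ :=
  ((DeltaMat Θ p).updateCol τ
    (Fin.cons (α := fun _ => ℂ) (pdT ν (pdT μ Θ) p)
      (fun k : Fin n => pdT ν (pdT μ (pdZ k Θ)) p))).det

/-- The conjugate function Θ̄(a,b,c) := conj (Θ (conj a, conj b, conj c)). -/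
def conjFun {n : ℕ} (Θ : Pt n → ℂ) : Pt n → ℂ :=
  fun p => (starRingEnd ℂ)
    (Θ (fun k => (starRingEnd ℂ) (p.1 k), fun k => (starRingEnd ℂ) (p.2.1 k),
        (starRingEnd ℂ) p.2.2))

/-- Θ = -w̄ + O(2) : Θ vanishes at 0 and its differential at 0 is v ↦ -v_{w̄}. -/
def IsOrderTwo {n : ℕ} (Θ : Pt n → ℂ) : Prop :=
  Θ 0 = 0 ∧ ∀ v : Pt n, fderiv ℂ Θ 0 v = -v.2.2

/-- The pair of reality identities w̄ ≡ Θ̄(z̄, z, Θ(z, z̄, w̄)) and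
w ≡ Θ(z, z̄, Θ̄(z̄, z, w)), holding near the origin. -/
def Reality {n : ℕ} (Θ : Pt n → ℂ) : Prop :=
  (∀ᶠ p in 𝓝 (0 : Pt n), p.2.2 = conjFun Θ (p.2.1, p.1, Θ p)) ∧
  (∀ᶠ p in 𝓝 (0 : Pt n), p.2.2 = Θ (p.1, p.2.1, conjFun Θ (p.2.1, p.1, p.2.2)))

/-- The hypersurface M = {(z,w) : w = Θ(z, z̄, w̄)}. -/
def Mset {n : ℕ} (Θ : Pt n → ℂ) : Set ((Fin n → ℂ) × ℂ) :=
  {q | q.2 = Θ (q.1, fun k => (starRingEnd ℂ) (q.1 k), (starRingEnd ℂ) q.2)}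

/-- The Heisenberg pseudosphere of signature q :
{Im w = |z₁|² + ⋯ + |z_q|² − |z_{q+1}|² − ⋯ − |z_n|²}. -/
def HeisenbergPS (n q : ℕ) : Set ((Fin n → ℂ) × ℂ) :=
  {p | p.2.im = ∑ k : Fin n, (if (k : ℕ) < q then (1 : ℝ) else -1) * Complex.normSq (p.1 k)}

/-- M is pseudospherical at 0: some biholomorphism between neighborhoods of 0
maps M locally onto a piece of a Heisenberg pseudosphere of some signature q. -/
def PseudosphericalAt0 {n : ℕ} (M : Set ((Fin n → ℂ) × ℂ)) : Prop :=
  ∃ (U U' : Set ((Fin n → ℂ) × ℂ)) (h g : ((Fin n → ℂ) × ℂ) → (Fin n → ℂ) × ℂ) (q : ℕ),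
    q ≤ n ∧ IsOpen U ∧ IsOpen U' ∧ (0 : (Fin n → ℂ) × ℂ) ∈ U ∧
    AnalyticOnNhd ℂ h U ∧ AnalyticOnNhd ℂ g U' ∧
    Set.MapsTo h U U' ∧ Set.MapsTo g U' U ∧
    Set.LeftInvOn g h U ∧ Set.LeftInvOn h g U' ∧
    h '' (M ∩ U) = HeisenbergPS n q ∩ U'

/-- The conjugate zero-set {(z,w) : 0 = −w̄ + Θ̄(z̄, z, w)}. -/
def MsetConj {n : ℕ} (Θ : Pt n → ℂ) : Set ((Fin n → ℂ) × ℂ) :=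
  {q | (starRingEnd ℂ) q.2 = conjFun Θ (fun k => (starRingEnd ℂ) (q.1 k), q.1, q.2)}

/-!
Write `σ(z, w) = Θ(z, z̄, w̄)`, so that `M = {w = σ(z, w)}`. The first reality identity says that
`w ↦ σ(z, w)` is an involution, and `Θ = -w̄ + O(2)` says that `σ` has real derivative
`(z, w) ↦ -w̄` at `0`. Hence `conj σ(z, w) + w` is flat in `w` to first order, while along the
involution it increases by `conj r - r`, where `r = w - σ(z, w)`; so `Im r = o(|r|)`, and near `0`
the real equation `Re r = 0` already forces `r = 0`. Since `d(Re r)(0) = 2 du`, the analytic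
implicit function theorem solves `Re r = 0` as a graph `u = φ(x, y, v)` with `dφ(0) = 0`.
The two zero-sets agree outright, being complex conjugate equations.
-/

section Implicit

variable {𝕜 : Type*} [NontriviallyNormedField 𝕜]
  {E : Type*} [NormedAddCommGroup E] [NormedSpace 𝕜 E]

theorem HasStrictFDerivAt.analyticAt_localInverse [CompleteSpace E] {F : Type*}
    [NormedAddCommGroup F] [NormedSpace 𝕜 F] [CompleteSpace F] {f : E → F} {f' : E ≃L[𝕜] F}
    {a : E} (hf : HasStrictFDerivAt f (f' : E →L[𝕜] F) a) (ha : AnalyticAt 𝕜 f a) :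
    AnalyticAt 𝕜 (hf.localInverse f f' a) (f a) :=
  (hf.toOpenPartialHomeomorph f).analyticAt_symm' hf.mem_toOpenPartialHomeomorph_source ha
    hf.hasFDerivAt.fderiv

theorem ContinuousLinearMap.apply_prod_eq_add_mul (L : E × 𝕜 →L[𝕜] 𝕜) (e : E) (u : 𝕜) :
    L (e, u) = L (e, 0) + u * L (0, 1) := by
  rw [← smul_eq_mul, ← map_smul, ← map_add]; simp

def graphEquiv (L : E × 𝕜 →L[𝕜] 𝕜) (hL : L (0, 1) ≠ 0) : (E × 𝕜) ≃L[𝕜] (E × 𝕜) :=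
  .equivOfInverse ((ContinuousLinearMap.fst 𝕜 E 𝕜).prod L)
    ((ContinuousLinearMap.fst 𝕜 E 𝕜).prod ((L (0, 1))⁻¹ •
      (ContinuousLinearMap.snd 𝕜 E 𝕜 - (L.comp (.inl 𝕜 E 𝕜)).comp (.fst 𝕜 E 𝕜))))
    (fun p => by
      ext
      · rfl
      · simp [L.apply_prod_eq_add_mul p.1 p.2]
        field_simp)
    (fun p => by
      ext
      · rfl
      · simp [L.apply_prod_eq_add_mul p.1 (_ * _)]
        field_simp
        ring)

theorem AnalyticAt.exists_implicitFunction [CompleteSpace 𝕜] [CompleteSpace E] {G : E × 𝕜 → 𝕜}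
    {L : E × 𝕜 →L[𝕜] 𝕜} (hG : AnalyticAt 𝕜 G 0) (hL : HasFDerivAt G L 0) (hG0 : G 0 = 0)
    (hL1 : L (0, 1) ≠ 0) :
    ∃ φ : E → 𝕜, AnalyticAt 𝕜 φ 0 ∧ φ 0 = 0 ∧
      HasFDerivAt φ (-(L (0, 1))⁻¹ • L.comp (.inl 𝕜 E 𝕜)) 0 ∧
      ∀ᶠ p in 𝓝 0, G p = 0 ↔ p.2 = φ p.1 := by
  set H : E × 𝕜 → E × 𝕜 := fun p => (p.1, G p)
  have hHa : AnalyticAt 𝕜 H 0 := analyticAt_fst.prod hG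
  have hH : HasStrictFDerivAt H (graphEquiv L hL1 : E × 𝕜 →L[𝕜] E × 𝕜) 0 := by
    have hH' : fderiv 𝕜 H 0 = graphEquiv L hL1 := (hasFDerivAt_fst.prodMk hL).fderiv
    exact hH' ▸ hHa.hasStrictFDerivAt
  have hH0 : H 0 = 0 := Prod.ext rfl hG0
  set K := hH.localInverse H _ 0
  have hKa : AnalyticAt 𝕜 K 0 := hH0 ▸ hH.analyticAt_localInverse hHa
  have hKd : HasFDerivAt K ((graphEquiv L hL1).symm : E × 𝕜 →L[𝕜] E × 𝕜) 0 :=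
    hH0 ▸ hH.to_localInverse.hasFDerivAt
  have hK0 : K 0 = 0 := by simpa [hH0] using hH.localInverse_apply_image
  have hinl : ContinuousLinearMap.inl 𝕜 E 𝕜 0 = 0 := map_zero _
  refine ⟨fun e => (K (e, 0)).2, ?_, congrArg Prod.snd hK0, ?_, ?_⟩
  · exact analyticAt_snd.comp (hKa.comp_of_eq ((ContinuousLinearMap.inl 𝕜 E 𝕜).analyticAt 0) hinl)
  · have hφ' : (ContinuousLinearMap.snd 𝕜 E 𝕜).comp
        (((graphEquiv L hL1).symm : E × 𝕜 →L[𝕜] E × 𝕜).comp (.inl 𝕜 E 𝕜)) =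
        -(L (0, 1))⁻¹ • L.comp (.inl 𝕜 E 𝕜) := by
      ext e
      simp [graphEquiv]
    exact hφ' ▸ hasFDerivAt_snd.comp (0 : E)
      ((hinl ▸ hKd).comp (0 : E) (ContinuousLinearMap.inl 𝕜 E 𝕜).hasFDerivAt)
  · have hright : ∀ᶠ p : E × 𝕜 in 𝓝 0, H (K (p.1, 0)) = (p.1, 0) :=
      ((continuous_fst.prodMk continuous_const).tendsto' (0 : E × 𝕜) (H 0) hH0.symm).eventually
        hH.eventually_right_inverse
    filter_upwards [hH.eventually_left_inverse, hright] with p hleft hright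
    constructor
    · intro hGp
      have hHp : H p = (p.1, 0) := Prod.ext rfl hGp
      rw [← hHp]
      exact (congrArg Prod.snd hleft).symm
    · intro hp
      have hKp : K (p.1, 0) = p := Prod.ext (congrArg Prod.fst hright :) hp.symm
      simpa [hKp] using congrArg Prod.snd hright

end Implicit

open ComplexConjugate in
theorem eventually_eq_of_re_eq_of_involutive {E : Type*} [NormedAddCommGroup E]
    [NormedSpace ℝ E] {σ : E × ℂ → ℂ} {L : E × ℂ →L[ℝ] ℂ} (hσ : HasStrictFDerivAt σ L 0)
    (hL : ∀ c : ℂ, L (0, c) = -conj c) (hσ0 : σ 0 = 0)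
    (hinv : ∀ᶠ q in 𝓝 0, σ (q.1, σ q) = q.2) :
    ∀ᶠ q in 𝓝 0, q.2.re = (σ q).re → q.2 = σ q := by
  set g : E × ℂ → ℂ := fun q => conj (σ q) + q.2
  set D : E × ℂ →L[ℝ] ℂ := Complex.conjCLE.toContinuousLinearMap.comp L + .snd ℝ E ℂ
  have hg : HasStrictFDerivAt g D 0 :=
    (Complex.conjCLE.toContinuousLinearMap.hasStrictFDerivAt.comp 0 hσ).add hasStrictFDerivAt_snd
  have hD : ∀ c : ℂ, D (0, c) = 0 := fun c => by simp [D, hL]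
  have hpair : Tendsto (fun q : E × ℂ => ((q.1, σ q), q)) (𝓝 0) (𝓝 ((0 : E × ℂ), (0 : E × ℂ))) :=
    (continuousAt_fst.tendsto.prodMk_nhds (hσ0 ▸ hσ.continuousAt.tendsto)).prodMk_nhds tendsto_id
  filter_upwards [hpair.eventually (hg.isLittleO.def (c := 1 / 4) (by norm_num)), hinv]
    with q hq hqinv hre
  -- `g` is flat along `{0} × ℂ`, while involutivity makes its increment from `q` to
  -- `(q.1, σ q)` equal to `conj r - r = -2 r` for `r = q.2 - σ q`.
  set r := q.2 - σ q with hr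
  have hincr : g (q.1, σ q) - g q = conj r - r := by
    simp only [g, hqinv, hr, map_sub]; ring
  have hdiff : (q.1, σ q) - q = ((0 : E), -r) := by
    ext <;> simp [hr]
  have hconj : conj r = -r := by
    apply Complex.ext
    · simp [hr, hre]
    · simp [hr]; ring
  have hnorm : ‖((0 : E), -r)‖ = ‖r‖ := by simp [Prod.norm_def]
  rw [hincr, hdiff, hD, sub_zero, hconj, hnorm, ← neg_add', ← two_mul, norm_neg, norm_mul,
    Complex.norm_two] at hq
  exact sub_eq_zero.mp (norm_le_zero_iff.mp (by linarith))

section Hypersurface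

open ComplexConjugate

variable {n : ℕ} {Θ : Pt n → ℂ}

theorem mset_eq_msetConj (Θ : Pt n → ℂ) : Mset Θ = MsetConj Θ := by
  ext q
  simp only [Mset, MsetConj, conjFun, Complex.conj_conj]
  exact (star_injective.eq_iff).symm

variable (n) in
def diagEmbedding : (Fin n → ℂ) × ℂ →L[ℝ] Pt n :=
  (ContinuousLinearMap.fst ℝ _ _).prod
    (((ContinuousLinearMap.pi fun k =>
        Complex.conjCLE.toContinuousLinearMap.comp (ContinuousLinearMap.proj k)).comp
      (ContinuousLinearMap.fst ℝ _ _)).prod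
      (Complex.conjCLE.toContinuousLinearMap.comp (ContinuousLinearMap.snd ℝ _ _)))

theorem diagEmbedding_apply (q : (Fin n → ℂ) × ℂ) :
    diagEmbedding n q = (q.1, fun k => conj (q.1 k), conj q.2) := rfl

theorem AnalyticAt.comp_diagEmbedding (hΘ : AnalyticAt ℂ Θ 0) :
    AnalyticAt ℝ (Θ ∘ diagEmbedding n) 0 :=
  hΘ.restrictScalars.comp_of_eq ((diagEmbedding n).analyticAt 0) (map_zero _)

theorem AnalyticAt.hasStrictFDerivAt_comp_diagEmbedding (hΘ : AnalyticAt ℂ Θ 0) :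
    HasStrictFDerivAt (Θ ∘ diagEmbedding n)
      (((fderiv ℂ Θ 0).restrictScalars ℝ).comp (diagEmbedding n)) 0 := by
  have hΘ' : HasStrictFDerivAt Θ ((fderiv ℂ Θ 0).restrictScalars ℝ) (diagEmbedding n 0) := by
    rw [map_zero]
    exact hΘ.hasStrictFDerivAt.restrictScalars ℝ
  exact hΘ'.comp 0 (diagEmbedding n).hasStrictFDerivAt

theorem IsOrderTwo.fderiv_comp_diagEmbedding (h2 : IsOrderTwo Θ) (q : (Fin n → ℂ) × ℂ) :
    ((fderiv ℂ Θ 0).restrictScalars ℝ).comp (diagEmbedding n) q = -conj q.2 :=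
  h2.2 _

theorem Reality.eventually_comp_diagEmbedding_involutive (hR : Reality Θ) :
    ∀ᶠ q in 𝓝 0, Θ (diagEmbedding n (q.1, Θ (diagEmbedding n q))) = q.2 := by
  have hlim : Tendsto (diagEmbedding n) (𝓝 0) (𝓝 0) :=
    (map_zero (diagEmbedding n)) ▸ (diagEmbedding n).continuous.tendsto 0
  filter_upwards [hlim.eventually hR.1] with q hq
  simpa [conjFun, diagEmbedding_apply] using (congrArg conj hq).symm

theorem eventually_mem_mset_of_re_eq (hΘ : AnalyticAt ℂ Θ 0) (h2 : IsOrderTwo Θ)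
    (hR : Reality Θ) : ∀ᶠ q in 𝓝 0, q.2.re = (Θ (diagEmbedding n q)).re → q ∈ Mset Θ :=
  eventually_eq_of_re_eq_of_involutive hΘ.hasStrictFDerivAt_comp_diagEmbedding
    (fun c => h2.fderiv_comp_diagEmbedding (0, c)) (by simpa using h2.1)
    hR.eventually_comp_diagEmbedding_involutive

variable (n) in
/-- `((x, y, v), u) ↦ (x + iy, u + iv)`, with the graphed coordinate `u` split off last. -/
def realCoords : (((Fin n → ℝ) × (Fin n → ℝ) × ℝ) × ℝ) ≃L[ℝ] ((Fin n → ℂ) × ℂ) :=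
  LinearEquiv.toContinuousLinearEquiv
    ({ toFun := fun p => (fun k => Complex.mk (p.1.1 k) (p.1.2.1 k), Complex.mk p.2 p.1.2.2)
       invFun := fun q => ((fun k => (q.1 k).re, fun k => (q.1 k).im, q.2.im), q.2.re)
       map_add' := fun _ _ => rfl
       map_smul' := fun _ _ => by ext <;> apply Complex.ext <;> simp
       left_inv := fun _ => rfl
       right_inv := fun _ => rfl } :
      (((Fin n → ℝ) × (Fin n → ℝ) × ℝ) × ℝ) ≃ₗ[ℝ] ((Fin n → ℂ) × ℂ))

theorem realCoords_apply (p : ((Fin n → ℝ) × (Fin n → ℝ) × ℝ) × ℝ) :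
    realCoords n p = (fun k => Complex.mk (p.1.1 k) (p.1.2.1 k), Complex.mk p.2 p.1.2.2) := rfl

theorem realCoords_symm_apply (q : (Fin n → ℂ) × ℂ) :
    (realCoords n).symm q = ((fun k => (q.1 k).re, fun k => (q.1 k).im, q.2.im), q.2.re) := rfl

theorem exists_graph_re_eq (hΘ : AnalyticAt ℂ Θ 0) (h2 : IsOrderTwo Θ) :
    ∃ φ : (Fin n → ℝ) × (Fin n → ℝ) × ℝ → ℝ, AnalyticAt ℝ φ 0 ∧ φ 0 = 0 ∧ fderiv ℝ φ 0 = 0 ∧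
      ∀ᶠ q in 𝓝 0, (q.2.re = (Θ (diagEmbedding n q)).re ↔
        q.2.re = φ (fun k => (q.1 k).re, fun k => (q.1 k).im, q.2.im)) := by
  set ρ : (Fin n → ℂ) × ℂ → ℂ := fun q => q.2 - Θ (diagEmbedding n q)
  set Dρ : (Fin n → ℂ) × ℂ →L[ℝ] ℂ :=
    .snd ℝ _ _ - ((fderiv ℂ Θ 0).restrictScalars ℝ).comp (diagEmbedding n)
  set G := fun p => (ρ (realCoords n p)).re
  set L : (((Fin n → ℝ) × (Fin n → ℝ) × ℝ) × ℝ) →L[ℝ] ℝ :=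
    Complex.reCLM.comp (Dρ.comp (realCoords n : _ →L[ℝ] (Fin n → ℂ) × ℂ))
  have hρa : AnalyticAt ℝ ρ 0 := analyticAt_snd.sub hΘ.comp_diagEmbedding
  have hGa : AnalyticAt ℝ G 0 := Complex.reCLM.analyticAt _ |>.comp <|
    hρa.comp_of_eq ((realCoords n).toContinuousLinearMap.analyticAt 0) (map_zero _)
  have hGd : HasFDerivAt G L 0 := by
    have hρd : HasFDerivAt ρ Dρ (realCoords n 0) := by
      rw [map_zero]
      exact hasFDerivAt_snd.sub hΘ.hasStrictFDerivAt_comp_diagEmbedding.hasFDerivAt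
    exact Complex.reCLM.hasFDerivAt.comp 0 (hρd.comp 0 (realCoords n).hasFDerivAt)
  have hG0 : G 0 = 0 := by simp [G, ρ, h2.1]
  -- only the `u`-direction survives: `dρ(0)(z, w) = w + w̄`
  have hL : ∀ p, L p = 2 * p.2 := fun p => by
    simp [L, Dρ, h2.fderiv_comp_diagEmbedding, realCoords_apply]
    ring
  obtain ⟨φ, hφa, hφ0, hφd, hφ⟩ :=
    hGa.exists_implicitFunction hGd hG0 (by simp [hL])
  have hLx : L.comp (.inl ℝ _ ℝ) = 0 := by ext p <;> simp [hL]
  have hlim : Tendsto (realCoords n).symm (𝓝 0) (𝓝 0) :=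
    (map_zero (realCoords n).symm) ▸ (realCoords n).symm.continuous.tendsto 0
  refine ⟨φ, hφa, hφ0, by simpa [hLx] using hφd.fderiv, ?_⟩
  filter_upwards [hlim.eventually hφ] with q hq
  simp only [G, ContinuousLinearEquiv.apply_symm_apply] at hq
  simpa [ρ, realCoords_symm_apply, sub_eq_zero] using hq

end Hypersurface

theorem zero_sets_coincide_and_define_hypersurface_general {n : ℕ}
    (Θ : Pt n → ℂ) (hΘ : AnalyticAt ℂ Θ 0) (h2 : IsOrderTwo Θ) (hR : Reality Θ) :
    ∃ U : Set ((Fin n → ℂ) × ℂ), IsOpen U ∧ (0 : (Fin n → ℂ) × ℂ) ∈ U ∧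
      Mset Θ ∩ U = MsetConj Θ ∩ U ∧
      ∃ φ : (Fin n → ℝ) × (Fin n → ℝ) × ℝ → ℝ,
        AnalyticAt ℝ φ 0 ∧ φ 0 = 0 ∧ fderiv ℝ φ 0 = 0 ∧
        Mset Θ ∩ U =
          {q : (Fin n → ℂ) × ℂ |
            q.2.re = φ (fun k => (q.1 k).re, fun k => (q.1 k).im, q.2.im)} ∩ U := by
  obtain ⟨φ, hφa, hφ0, hφd, hgraph⟩ := exists_graph_re_eq hΘ h2
  obtain ⟨U, hU, hUo, hU0⟩ :=
    eventually_nhds_iff.mp (hgraph.and (eventually_mem_mset_of_re_eq hΘ h2 hR))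
  refine ⟨U, hUo, hU0, by rw [mset_eq_msetConj], φ, hφa, hφ0, hφd, ?_⟩
  ext q
  refine and_congr_left fun hq => ⟨fun hM => ?_, fun hφq => ?_⟩
  · exact (hU q hq).1.mp (congrArg Complex.re hM)
  · exact (hU q hq).2 ((hU q hq).1.mpr hφq)

/-- if Θ = −w̄ + O(2) satisfies the pair of reality identities,
then the two zero-sets {w = Θ(z, z̄, w̄)} and {w̄ = Θ̄(z̄, z, w)} coincide near 0,
and this common set is a one-codimensional real analytic hypersurface through 0,
given near 0 by a graphed equation u = φ(x, y, v) with φ real analytic,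
φ(0) = 0 and dφ(0) = 0. -/
theorem zero_sets_coincide_and_define_hypersurface {n : ℕ} (hn : 1 ≤ n)
    (Θ : Pt n → ℂ) (hΘ : AnalyticAt ℂ Θ 0) (h2 : IsOrderTwo Θ) (hR : Reality Θ) :
    ∃ U : Set ((Fin n → ℂ) × ℂ), IsOpen U ∧ (0 : (Fin n → ℂ) × ℂ) ∈ U ∧
      Mset Θ ∩ U = MsetConj Θ ∩ U ∧
      ∃ φ : (Fin n → ℝ) × (Fin n → ℝ) × ℝ → ℝ,
        AnalyticAt ℝ φ 0 ∧ φ 0 = 0 ∧ fderiv ℝ φ 0 = 0 ∧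
        Mset Θ ∩ U =
          {q : (Fin n → ℂ) × ℂ |
            q.2.re = φ (fun k => (q.1 k).re, fun k => (q.1 k).im, q.2.im)} ∩ U :=
  zero_sets_coincide_and_define_hypersurface_general Θ hΘ h2 hR
end
end

section
/- Let K = ℝ or ℂ, n ≥ 2, and let Q = Q(x, a) be K-analytic near 0 in Kⁿ×K^{n+1} (a = (a¹,…,a^{n+1})). Then for all μ, ν ∈ {1,…,n+1} and all ℓ ∈ {1,…,n}, the following identity holds identically near 0: □ · ∂/∂a^μ(□^ν_{[0_{1+ℓ}]}) − □^ν_{[0_{1+ℓ}]} · ∂/∂a^μ(□) = − Σ_{τ=1}^{n+1} □^τ_{[0_{1+ℓ}]} · □^ν_{[a^τ a^μ]}. -/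
open Topology Filter Set

noncomputable section

/-- The space Kⁿ × K^{n+1} of variables (x, a) = (x¹,…,xⁿ, a¹,…,a^{n+1}). -/
abbrev QPt (K : Type*) (n : ℕ) := (Fin n → K) × (Fin (n + 1) → K)

/-- The first-order jet space Kⁿ × K × Kⁿ of variables (x, y, λ), λ_k = y_{x^k}. -/
abbrev JPt (K : Type*) (n : ℕ) := (Fin n → K) × K × (Fin n → K)

variable {K : Type*} [RCLike K] {n : ℕ}

/-- Partial derivative ∂/∂x^k on (x,a)-space. -/
def pdX (k : Fin n) (Q : QPt K n → K) : QPt K n → K :=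
  fun p => fderiv K Q p (Pi.single k 1, 0)

/-- Partial derivative ∂/∂a^μ on (x,a)-space. -/
def pdA (μ : Fin (n + 1)) (Q : QPt K n → K) : QPt K n → K :=
  fun p => fderiv K Q p (0, Pi.single μ 1)

/-- Partial derivative ∂/∂λ_ℓ on the jet space (x,y,λ). -/
def pdL (ℓ : Fin n) (G : JPt K n → K) : JPt K n → K :=
  fun p => fderiv K G p (0, 0, Pi.single ℓ 1)

/-- The (n+1)×(n+1) matrix whose first row is (Q_{a^μ})_μ and whose (1+k)-th row is
(Q_{x^k a^μ})_μ; its determinant is □. -/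
def SqMat (Q : QPt K n → K) (p : QPt K n) : Matrix (Fin (n + 1)) (Fin (n + 1)) K :=
  Matrix.of fun i μ =>
    Fin.cons (α := fun _ => K) (pdA μ Q p) (fun k : Fin n => pdA μ (pdX k Q) p) i

/-- The Jacobian-like determinant □. -/
def Sq (Q : QPt K n → K) (p : QPt K n) : K := (SqMat Q p).det

/-- □^μ_{[0_{1+ℓ}]} : □ with its μ-th column replaced by the standard basis column
with 1 in the (1+ℓ)-th entry. -/
def SqCol (Q : QPt K n → K) (ℓ : Fin n) (μ : Fin (n + 1)) (p : QPt K n) : K :=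
  ((SqMat Q p).updateCol μ (Pi.single ℓ.succ 1)).det

/-- □^ν_{[a^μ a^τ]} : □ with its ν-th column replaced by
(Q_{a^μ a^τ}, Q_{x¹ a^μ a^τ}, …, Q_{xⁿ a^μ a^τ})ᵀ. -/
def SqAA (Q : QPt K n → K) (μ τ : Fin (n + 1)) (ν : Fin (n + 1)) (p : QPt K n) : K :=
  ((SqMat Q p).updateCol ν
    (Fin.cons (α := fun _ => K) (pdA τ (pdA μ Q) p)
      (fun k : Fin n => pdA τ (pdA μ (pdX k Q)) p))).det

/-- The base point (0, Q(0,0), Q_{x¹}(0,0), …, Q_{xⁿ}(0,0)) in the jet space. -/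
def basePt (Q : QPt K n → K) : JPt K n :=
  ((0 : Fin n → K), Q 0, fun k => pdX k Q 0)

/-!
Differentiating the determinants column by column (Jacobi's formula), the identity splits into
one identity for each τ, which is Sylvester's identity
`det M * det M[ν ← e, τ ← v] = det M[ν ← e] * det M[τ ← v] - det M[τ ← e] * det M[ν ← v]`
for `M = □`, `e = 0_{1+ℓ}` and `v` the `a^μ`-derivative of the τ-th column. Multiplying by `adj M`
reduces Sylvester's identity to a `2 × 2` determinant, up to a factor `det M`; that factor is
cancelled for the generic matrix over a polynomial ring, and the identity then specialises.
-/

namespace Matrix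

variable {ι R : Type*} [Fintype ι] [DecidableEq ι] [CommRing R]

theorem det_one_updateCol (ν : ι) (u : ι → R) : ((1 : Matrix ι ι R).updateCol ν u).det = u ν := by
  rw [← cramer_apply, cramer_one]
  rfl

theorem det_one_updateCol_updateCol {ν τ : ι} (hτν : τ ≠ ν) (u w : ι → R) :
    (((1 : Matrix ι ι R).updateCol ν u).updateCol τ w).det = u ν * w τ - u τ * w ν := by
  set A := (1 : Matrix ι ι R).updateCol ν u
  have hτ : (A.updateCol τ (Pi.single τ 1)).det = u ν := by
    have hcol : (fun i => A i τ) = Pi.single τ 1 := by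
      ext i
      simp [A, updateCol_ne hτν, one_apply, Pi.single_apply, eq_comm]
    rw [← hcol, updateCol_eq_self, det_one_updateCol]
  have hν : (A.updateCol τ (Pi.single ν 1)).det = -u τ := by
    have hswap : A.updateCol τ (Pi.single ν 1) =
        ((1 : Matrix ι ι R).updateCol τ u).submatrix id (Equiv.swap τ ν) := by
      ext i j
      simp only [A, updateCol_apply, submatrix_apply, id, Equiv.swap_apply_def, one_apply,
        Pi.single_apply]
      split_ifs <;> simp_all [eq_comm]
    rw [hswap, det_permute', Equiv.Perm.sign_swap hτν, det_one_updateCol]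
    simp
  have hrest : ∀ j, j ≠ τ ∧ j ≠ ν → (A.updateCol τ (Pi.single j 1)).det = 0 := fun j hj =>
    det_zero_of_column_eq hj.1.symm fun i => by
      simp [A, updateCol_ne hj.1, updateCol_ne hj.2, one_apply, Pi.single_apply, eq_comm]
  calc (A.updateCol τ w).det = ∑ j, w j * (A.updateCol τ (Pi.single j 1)).det := by
        conv_lhs => rw [← cramer_apply, pi_eq_sum_univ' w]
        rw [map_sum, Finset.sum_apply]
        simp only [cramer_apply, det_updateCol_smul]
    _ = u ν * w τ - u τ * w ν := by
        rw [Fintype.sum_eq_add τ ν hτν fun j hj => by rw [hrest j hj, mul_zero], hτ, hν]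
        ring

theorem det_mul_det_mul_det_updateCol_updateCol {ν τ : ι} (hτν : τ ≠ ν) (M : Matrix ι ι R)
    (e v : ι → R) :
    M.det * (M.det * ((M.updateCol ν e).updateCol τ v).det) =
      M.det * ((M.updateCol ν e).det * (M.updateCol τ v).det
        - (M.updateCol τ e).det * (M.updateCol ν v).det) := by
  have hcramer : ∀ σ x, (M.updateCol σ x).det = (M.adjugate *ᵥ x) σ := fun σ x => by
    rw [← cramer_apply, cramer_eq_adjugate_mulVec]
  have hM : ∀ x, M *ᵥ (M.adjugate *ᵥ x) = M.det • x := fun x => by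
    rw [mulVec_mulVec, mul_adjugate, smul_mulVec, one_mulVec]
  have hprod : M * (((1 : Matrix ι ι R).updateCol ν (M.adjugate *ᵥ e)).updateCol τ
      (M.adjugate *ᵥ v)) = (M.updateCol ν (M.det • e)).updateCol τ (M.det • v) := by
    rw [mul_updateCol, mul_updateCol, mul_one, hM, hM]
  have := congrArg det hprod
  rw [det_mul, det_one_updateCol_updateCol hτν, det_updateCol_smul, updateCol_comm _ hτν.symm,
    det_updateCol_smul, updateCol_comm _ hτν] at this
  simpa only [hcramer] using this.symm

theorem det_mul_det_updateCol_updateCol [IsDomain R] {ν τ : ι} (hτν : τ ≠ ν)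
    (M : Matrix ι ι R) (e v : ι → R) :
    M.det * ((M.updateCol ν e).updateCol τ v).det =
      (M.updateCol ν e).det * (M.updateCol τ v).det
        - (M.updateCol τ e).det * (M.updateCol ν v).det := by
  let φ := MvPolynomial.aeval (R := R) fun p : ι × ι => M p.1 p.2
  have hφX : φ.mapMatrix (mvPolynomialX ι ι R) = M := mvPolynomialX_mapMatrix_aeval R M
  have hφ : ∀ (A : Matrix ι ι (MvPolynomial (ι × ι) R)) σ (x : ι → R),
      φ.mapMatrix (A.updateCol σ (MvPolynomial.C ∘ x)) = (φ.mapMatrix A).updateCol σ x := by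
    intro A σ x
    rw [AlgHom.mapMatrix_apply, map_updateCol]
    congr 2
    ext i; simp [φ]
  have generic := mul_left_cancel₀ (det_mvPolynomialX_ne_zero ι R)
    (det_mul_det_mul_det_updateCol_updateCol hτν (mvPolynomialX ι ι R)
      (MvPolynomial.C ∘ e) (MvPolynomial.C ∘ v))
  have := congrArg φ generic
  simpa only [map_mul, map_sub, AlgHom.map_det, hφ, hφX] using this

theorem det_mul_sum_det_updateCol_updateCol_sub [IsDomain R] (M : Matrix ι ι R) (ν : ι)
    (e : ι → R) (b : ι → ι → R) :
    M.det * ∑ τ, ((M.updateCol ν e).updateCol τ (Function.update b ν 0 τ)).det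
      - (M.updateCol ν e).det * ∑ τ, (M.updateCol τ (b τ)).det
      = -∑ τ, (M.updateCol τ e).det * (M.updateCol ν (b τ)).det := by
  rw [Finset.mul_sum, Finset.mul_sum, ← Finset.sum_sub_distrib, ← Finset.sum_neg_distrib]
  refine Finset.sum_congr rfl fun τ _ => ?_
  rcases eq_or_ne τ ν with rfl | hτν
  · rw [Function.update_self,
      det_eq_zero_of_column_eq_zero (A := (M.updateCol τ e).updateCol τ 0) τ fun _ => updateCol_self]
    ring
  · rw [Function.update_of_ne hτν, det_mul_det_updateCol_updateCol hτν]
    ring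

end Matrix

section DetDeriv

open Matrix

variable {ι 𝕜 E : Type*} [Fintype ι] [DecidableEq ι] [NontriviallyNormedField 𝕜]
  [NormedAddCommGroup E] [NormedSpace 𝕜 E]

def Matrix.detRowContinuousMultilinear : ContinuousMultilinearMap 𝕜 (fun _ : ι => ι → 𝕜) 𝕜 where
  toMultilinearMap := (detRowAlternating : (ι → 𝕜) [⋀^ι]→ₗ[𝕜] 𝕜).toMultilinearMap
  cont := continuous_id.matrix_det

theorem fderiv_det_apply {g : ι → E → ι → 𝕜} {p : E}
    (hg : ∀ j, DifferentiableAt 𝕜 (g j) p) (w : E) :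
    fderiv 𝕜 (fun q => (of fun i j => g j q i).det) p w =
      ∑ j, ((of fun i j => g j p i).updateCol j (fderiv 𝕜 (g j) p w)).det := by
  have h := HasFDerivAt.multilinear_comp (f := detRowContinuousMultilinear)
    fun j => (hg j).hasFDerivAt
  have hfun : (fun q => (of fun i j => g j q i).det) =
      fun q => detRowContinuousMultilinear fun j => g j q := funext fun q => det_transpose _
  rw [hfun, h.fderiv]
  simp only [FunLike.coe_sum, Finset.sum_apply, ContinuousLinearMap.coe_comp,
    Function.comp_apply, ContinuousMultilinearMap.toContinuousLinearMap_apply]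
  refine Finset.sum_congr rfl fun j _ => ?_
  rw [← det_transpose, ← updateRow_transpose]
  rfl

theorem fderiv_det_updateCol_apply {g : ι → E → ι → 𝕜} {p : E}
    (hg : ∀ j, DifferentiableAt 𝕜 (g j) p) (ν : ι) (c : ι → 𝕜) (w : E) :
    fderiv 𝕜 (fun q => ((of fun i j => g j q i).updateCol ν c).det) p w =
      ∑ j, (((of fun i j => g j p i).updateCol ν c).updateCol j
        (Function.update (fun k => fderiv 𝕜 (g k) p w) ν 0 j)).det := by
  have hfun : ∀ q, (of fun i j => g j q i).updateCol ν c =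
      of fun i j => Function.update g ν (fun _ => c) j q i := fun q => by
    ext i j
    rcases eq_or_ne j ν with rfl | hj <;> simp [*]
  have hdiff : ∀ j, DifferentiableAt 𝕜 (Function.update g ν (fun _ => c) j) p := fun j => by
    rcases eq_or_ne j ν with rfl | hj
    · simp
    · simpa [hj] using hg j
  simp_rw [hfun, fderiv_det_apply hdiff]
  refine Finset.sum_congr rfl fun j _ => ?_
  rcases eq_or_ne j ν with rfl | hj <;> simp [*]

end DetDeriv

section Square

open Matrix

variable {Q : QPt K n → K} {p : QPt K n}

theorem AnalyticAt.pdX (hQ : AnalyticAt K Q p) (k : Fin n) : AnalyticAt K (pdX k Q) p :=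
  ((ContinuousLinearMap.apply K K ((Pi.single k 1, 0) : QPt K n)).analyticAt _).comp hQ.fderiv

theorem AnalyticAt.pdA (hQ : AnalyticAt K Q p) (μ : Fin (n + 1)) : AnalyticAt K (pdA μ Q) p :=
  ((ContinuousLinearMap.apply K K ((0, Pi.single μ 1) : QPt K n)).analyticAt _).comp hQ.fderiv

variable (Q) in
def xJet : Fin (n + 1) → QPt K n → K := Fin.cons Q fun k => pdX k Q

theorem AnalyticAt.xJet (hQ : AnalyticAt K Q p) (i : Fin (n + 1)) : AnalyticAt K (xJet Q i) p := by
  cases i using Fin.cases with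
  | zero => exact hQ
  | succ k => exact hQ.pdX k

variable (Q p) in
theorem sqMat_eq_of : SqMat Q p = of fun i τ => pdA τ (xJet Q i) p := by
  ext i τ
  cases i using Fin.cases <;> rfl

variable (Q p) in
theorem sqAA_eq (τ μ ν : Fin (n + 1)) :
    SqAA Q τ μ ν p = ((SqMat Q p).updateCol ν fun i => pdA μ (pdA τ (xJet Q i)) p).det := by
  unfold SqAA
  congr 2
  funext i
  cases i using Fin.cases <;> rfl

theorem differentiableAt_sqMat_col (hQ : AnalyticAt K Q p) (τ : Fin (n + 1)) :
    DifferentiableAt K (fun q i => pdA τ (xJet Q i) q) p :=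
  differentiableAt_pi.2 fun i => ((hQ.xJet i).pdA τ).differentiableAt

theorem fderiv_sqMat_col (hQ : AnalyticAt K Q p) (τ μ : Fin (n + 1)) :
    fderiv K (fun q i => pdA τ (xJet Q i) q) p (0, Pi.single μ 1) =
      fun i => pdA μ (pdA τ (xJet Q i)) p := by
  rw [fderiv_pi fun i => ((hQ.xJet i).pdA τ).differentiableAt]
  rfl

theorem pdA_sq (hQ : AnalyticAt K Q p) (μ : Fin (n + 1)) :
    pdA μ (Sq Q) p =
      ∑ τ, ((SqMat Q p).updateCol τ fun i => pdA μ (pdA τ (xJet Q i)) p).det := by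
  have h := fderiv_det_apply (differentiableAt_sqMat_col hQ) (0, Pi.single μ 1)
  simp only [fderiv_sqMat_col hQ, ← sqMat_eq_of] at h
  exact h

theorem pdA_sqCol (hQ : AnalyticAt K Q p) (μ ν : Fin (n + 1)) (ℓ : Fin n) :
    pdA μ (SqCol Q ℓ ν) p =
      ∑ τ, (((SqMat Q p).updateCol ν (Pi.single ℓ.succ 1)).updateCol τ
        (Function.update (fun τ i => pdA μ (pdA τ (xJet Q i)) p) ν 0 τ)).det := by
  have h := fderiv_det_updateCol_apply (differentiableAt_sqMat_col hQ) ν (Pi.single ℓ.succ 1)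
    (0, Pi.single μ 1)
  simp only [fderiv_sqMat_col hQ, ← sqMat_eq_of] at h
  exact h

end Square

theorem square_determinant_derivative_identity_general {K : Type*} [RCLike K] {n : ℕ}
    (Q : QPt K n → K) (hQ : AnalyticAt K Q 0) :
    ∀ (μ ν : Fin (n + 1)) (ℓ : Fin n), ∀ᶠ p in 𝓝 (0 : QPt K n),
      Sq Q p * pdA μ (SqCol Q ℓ ν) p - SqCol Q ℓ ν p * pdA μ (Sq Q) p =
        -∑ τ : Fin (n + 1), SqCol Q ℓ τ p * SqAA Q τ μ ν p := by
  intro μ ν ℓ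
  filter_upwards [hQ.eventually_analyticAt] with p hp
  rw [pdA_sq hp, pdA_sqCol hp]
  simp only [sqAA_eq]
  exact Matrix.det_mul_sum_det_updateCol_updateCol_sub _ ν _ _

/-- the determinantal identity
□·∂_{a^μ}(□^ν_{[0_{1+ℓ}]}) − □^ν_{[0_{1+ℓ}]}·∂_{a^μ}(□) = −Σ_τ □^τ_{[0_{1+ℓ}]}·□^ν_{[a^τ a^μ]},
holding identically near the origin. -/
theorem square_determinant_derivative_identity {K : Type*} [RCLike K] {n : ℕ}
    (hn : 2 ≤ n) (Q : QPt K n → K) (hQ : AnalyticAt K Q 0) :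
    ∀ (μ ν : Fin (n + 1)) (ℓ : Fin n), ∀ᶠ p in 𝓝 (0 : QPt K n),
      Sq Q p * pdA μ (SqCol Q ℓ ν) p - SqCol Q ℓ ν p * pdA μ (Sq Q) p =
        -∑ τ : Fin (n + 1), SqCol Q ℓ τ p * SqAA Q τ μ ν p :=
  square_determinant_derivative_identity_general Q hQ
end
end

section
/- Let n ≥ 2, let Θ = Θ(z, z̄, w̄) be holomorphic near 0 in ℂ^{2n+1} with Θ = −w̄ + O(2) and Δ(0,0,0) ≠ 0, let ζ, ξ be the holomorphic implicit functions satisfying w ≡ Θ(z, ζ(z,w,λ), ξ(z,w,λ)) and λ_k ≡ Θ_{z_k}(z, ζ(z,w,λ), ξ(z,w,λ)), and define Φ_{k₁,k₂}(z,w,λ) := Θ_{z_{k₁}z_{k₂}}(z, ζ(z,w,λ), ξ(z,w,λ)) for 1 ≤ k₁,k₂ ≤ n. Then: (a) Φ_{k₁,k₂} = Φ_{k₂,k₁} for all k₁, k₂; and (b) for every fixed (z̄₀, w̄₀) sufficiently close to 0 in ℂⁿ×ℂ, the holomorphic function w(z) := Θ(z, z̄₀, w̄₀) satisfies, for all z near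 0 and all 1 ≤ k₁, k₂ ≤ n, the second-order system w_{z_{k₁}z_{k₂}}(z) = Φ_{k₁,k₂}(z, w(z), w_{z₁}(z), …, w_{zₙ}(z)). In other words, the family of Segre varieties S_{z̄₀,w̄₀} = {w = Θ(z, z̄₀, w̄₀)} is exactly a family of solution graphs of the associated completely integrable system, whose general solution is Θ(z, z̄, w̄) with (z̄, w̄) as integration constants. -/
open Topology Filter Set

noncomputable section

/-- The first-order jet space ℂⁿ × ℂ × ℂⁿ of variables (z, w, λ), λ_k = w_{z_k}. -/
abbrev JPtC (n : ℕ) := (Fin n → ℂ) × ℂ × (Fin n → ℂ)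

/-- Partial derivative ∂/∂λ_ℓ on the jet space. -/
def pdLC {n : ℕ} (ℓ : Fin n) (G : JPtC n → ℂ) : JPtC n → ℂ :=
  fun q => fderiv ℂ G q (0, 0, Pi.single ℓ 1)

/-- The base point (0, Θ(0,0,0), Θ_{z₁}(0,0,0), …, Θ_{zₙ}(0,0,0)) in the jet space. -/
def basePtC {n : ℕ} (Θ : Pt n → ℂ) : JPtC n :=
  ((0 : Fin n → ℂ), Θ 0, fun k => pdZ k Θ 0)

/-- The right-hand sides Φ_{k₁,k₂}(z,w,λ) := Θ_{z_{k₁}z_{k₂}}(z, ζ(z,w,λ), ξ(z,w,λ))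
of the associated second-order PDE system, (ζ, ξ) = ZX. -/
def PhiFun {n : ℕ} (Θ : Pt n → ℂ) (ZX : JPtC n → (Fin n → ℂ) × ℂ)
    (k₁ k₂ : Fin n) : JPtC n → ℂ :=
  fun q => pdZ k₂ (pdZ k₁ Θ) (q.1, ZX q)

/-!
Near the base point, the defining identities of `ζ, ξ` say that `q ↦ (z, ζ(q), ξ(q))` is a right
inverse of the Segre jet map `p ↦ (z, Θ(p), Θ_z(p))`. Both spaces have dimension `2n + 1`, so by
the inverse function theorem it is a two-sided inverse near `0`; evaluating `Φ_{k₁,k₂}` on the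
jet of `w = Θ(·, z̄₀, w̄₀)` therefore returns `Θ_{z_{k₁}z_{k₂}}`, which is (b). Part (a) is the
symmetry of second derivatives of the analytic function `Θ` at the points `(z, ζ, ξ)` near `0`.
-/

open Module

theorem AnalyticAt.fderiv_fderiv_apply_comm {𝕜 E F : Type*} [NontriviallyNormedField 𝕜]
    [NormedAddCommGroup E] [NormedSpace 𝕜 E] [NormedAddCommGroup F] [NormedSpace 𝕜 F]
    [CompleteSpace F] {f : E → F} {x : E} (hf : AnalyticAt 𝕜 f x) (u v : E) :
    fderiv 𝕜 (fun y => fderiv 𝕜 f y u) x v = fderiv 𝕜 (fun y => fderiv 𝕜 f y v) x u := by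
  have hf' := hf.fderiv.differentiableAt
  rw [fderiv_clm_apply hf' (differentiableAt_const u),
    fderiv_clm_apply hf' (differentiableAt_const v)]
  simpa using hf.contDiffAt.isSymmSndFDerivAt_of_omega v u

/-- The chain rule makes `f'` surjective, hence invertible by the dimension count, and then `g`
agrees with the local inverse of `f`. -/
theorem HasStrictFDerivAt.eventually_leftInverse_of_rightInverse {𝕜 E F : Type*}
    [NontriviallyNormedField 𝕜] [CompleteSpace 𝕜]
    [NormedAddCommGroup E] [NormedSpace 𝕜 E] [FiniteDimensional 𝕜 E]
    [NormedAddCommGroup F] [NormedSpace 𝕜 F] [FiniteDimensional 𝕜 F]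
    {f : E → F} {f' : E →L[𝕜] F} {g : F → E} {a : E}
    (hf : HasStrictFDerivAt f f' a) (hg : DifferentiableAt 𝕜 g (f a)) (hga : g (f a) = a)
    (hfg : ∀ᶠ y in 𝓝 (f a), f (g y) = y) (hdim : finrank 𝕜 E = finrank 𝕜 F) :
    ∀ᶠ x in 𝓝 a, g (f x) = x := by
  have hf'g' : f'.comp (fderiv 𝕜 g (f a)) = ContinuousLinearMap.id 𝕜 F := by
    have hcomp := (hga ▸ hf.hasFDerivAt).comp (f a) hg.hasFDerivAt
    rw [← hcomp.fderiv, ← fderiv_id (x := f a)]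
    exact Filter.EventuallyEq.fderiv_eq (f₁ := f ∘ g) hfg
  have hsurj : Function.Surjective f' := fun y =>
    ⟨fderiv 𝕜 g (f a) y, congrArg (· y) hf'g'⟩
  have hinj : Function.Injective f' :=
    (LinearMap.injective_iff_surjective_of_finrank_eq_finrank hdim).mpr hsurj
  have := FiniteDimensional.complete 𝕜 E
  let e : E ≃L[𝕜] F :=
    (LinearEquiv.ofBijective f'.toLinearMap ⟨hinj, hsurj⟩).toContinuousLinearEquiv
  have he : HasStrictFDerivAt f (e : E →L[𝕜] F) a := hf
  have hgf : Tendsto (g ∘ f) (𝓝 a) (𝓝 a) := by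
    simpa [ContinuousAt, hga] using hg.continuousAt.comp hf.continuousAt
  filter_upwards [he.eventually_left_inverse, hgf.eventually he.eventually_left_inverse,
    hf.continuousAt.eventually hfg] with x hx hgfx hfgfx
  calc g (f x) = he.localInverse f e a (f (g (f x))) := hgfx.symm
    _ = he.localInverse f e a (f x) := by rw [hfgfx]
    _ = x := hx

section SegreJet

variable {n : ℕ} {Θ : Pt n → ℂ}

theorem pdZ_pdZ_comm {p : Pt n} (hΘ : AnalyticAt ℂ Θ p) (k₁ k₂ : Fin n) :
    pdZ k₂ (pdZ k₁ Θ) p = pdZ k₁ (pdZ k₂ Θ) p :=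
  hΘ.fderiv_fderiv_apply_comm _ _

theorem eventually_pdZ_pdZ_comm {p : Pt n} (hΘ : AnalyticAt ℂ Θ p) :
    ∀ᶠ x in 𝓝 p, ∀ k₁ k₂ : Fin n, pdZ k₂ (pdZ k₁ Θ) x = pdZ k₁ (pdZ k₂ Θ) x :=
  hΘ.eventually_analyticAt.mono fun _ hx => pdZ_pdZ_comm hx

theorem analyticAt_pdZ {p : Pt n} (hΘ : AnalyticAt ℂ Θ p) (k : Fin n) :
    AnalyticAt ℂ (pdZ k Θ) p :=
  ((ContinuousLinearMap.apply ℂ ℂ ((Pi.single k 1, 0, 0) : Pt n)).analyticAt _).comp hΘ.fderiv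

/-- The first-order jet `(z, w(z), w_z(z))` of the Segre graphing function `w = Θ(·, z̄, w̄)`. -/
def segreJet (Θ : Pt n → ℂ) (p : Pt n) : JPtC n :=
  (p.1, Θ p, fun k => pdZ k Θ p)

/-- `(z, w, λ) ↦ (z, ζ(z, w, λ), ξ(z, w, λ))`, so that `PhiFun Θ ZX k₁ k₂` is
`pdZ k₂ (pdZ k₁ Θ) ∘ jetInverse ZX`. -/
def jetInverse (ZX : JPtC n → (Fin n → ℂ) × ℂ) (q : JPtC n) : Pt n :=
  (q.1, ZX q)

theorem analyticAt_segreJet (hΘ : AnalyticAt ℂ Θ 0) : AnalyticAt ℂ (segreJet Θ) 0 :=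
  analyticAt_fst.prod (hΘ.prod (AnalyticAt.pi fun k => analyticAt_pdZ hΘ k))

theorem eventually_segreJet_jetInverse {ZX : JPtC n → (Fin n → ℂ) × ℂ}
    (hid : ∀ᶠ q in 𝓝 (basePtC Θ),
      q.2.1 = Θ (q.1, ZX q) ∧ ∀ k : Fin n, q.2.2 k = pdZ k Θ (q.1, ZX q)) :
    ∀ᶠ q in 𝓝 (basePtC Θ), segreJet Θ (jetInverse ZX q) = q := by
  filter_upwards [hid] with q ⟨hw, hlam⟩
  exact Prod.ext rfl (Prod.ext hw.symm (funext fun k => (hlam k).symm))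

theorem finrank_pt_eq_finrank_jetPtC : finrank ℂ (Pt n) = finrank ℂ (JPtC n) := by
  simp only [Module.finrank_prod, Module.finrank_fin_fun, Module.finrank_self]
  ring

end SegreJet

theorem segre_varieties_solve_associated_system_general {n : ℕ} (Θ : Pt n → ℂ)
    (hΘ : AnalyticAt ℂ Θ 0)
    (ZX : JPtC n → (Fin n → ℂ) × ℂ)
    (hZX : AnalyticAt ℂ ZX (basePtC Θ)) (hZX0 : ZX (basePtC Θ) = 0)
    (hid : ∀ᶠ q in 𝓝 (basePtC Θ),
      q.2.1 = Θ (q.1, ZX q) ∧ ∀ k : Fin n, q.2.2 k = pdZ k Θ (q.1, ZX q)) :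
    -- (a) symmetry
    (∀ k₁ k₂ : Fin n, ∀ᶠ q in 𝓝 (basePtC Θ),
      PhiFun Θ ZX k₁ k₂ q = PhiFun Θ ZX k₂ k₁ q) ∧
    -- (b) every Segre variety is a solution graph
    (∀ᶠ p in 𝓝 (0 : Pt n), ∀ k₁ k₂ : Fin n,
      pdZ k₂ (pdZ k₁ Θ) p =
        PhiFun Θ ZX k₁ k₂ (p.1, Θ p, fun k => pdZ k Θ p)) := by
  have hG0 : jetInverse ZX (basePtC Θ) = 0 := by
    rw [jetInverse, hZX0]
    rfl
  have hG : DifferentiableAt ℂ (jetInverse ZX) (basePtC Θ) :=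
    differentiableAt_fst.prodMk hZX.differentiableAt
  have hG_tendsto : Tendsto (jetInverse ZX) (𝓝 (basePtC Θ)) (𝓝 0) :=
    hG0 ▸ hG.continuousAt.tendsto
  have hGF : ∀ᶠ p in 𝓝 0, jetInverse ZX (segreJet Θ p) = p :=
    (analyticAt_segreJet hΘ).hasStrictFDerivAt.eventually_leftInverse_of_rightInverse hG hG0
      (eventually_segreJet_jetInverse hid) finrank_pt_eq_finrank_jetPtC
  refine ⟨fun k₁ k₂ => ?_, hGF.mono fun p hp k₁ k₂ => ?_⟩
  · exact (hG_tendsto.eventually (eventually_pdZ_pdZ_comm hΘ)).mono fun q hq => hq k₁ k₂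
  · exact congrArg (pdZ k₂ (pdZ k₁ Θ)) hp.symm

/-- (a) the right-hand sides Φ_{k₁,k₂} of the associated PDE system are
symmetric in (k₁,k₂); (b) for every fixed (z̄₀,w̄₀) close to 0, the Segre graphing
function w(z) = Θ(z, z̄₀, w̄₀) solves the system
w_{z_{k₁}z_{k₂}}(z) = Φ_{k₁,k₂}(z, w(z), w_z(z)). -/
theorem segre_varieties_solve_associated_system {n : ℕ} (hn : 2 ≤ n) (Θ : Pt n → ℂ)
    (hΘ : AnalyticAt ℂ Θ 0) (h2 : IsOrderTwo Θ) (hLevi : Delta Θ 0 ≠ 0)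
    (ZX : JPtC n → (Fin n → ℂ) × ℂ)
    (hZX : AnalyticAt ℂ ZX (basePtC Θ)) (hZX0 : ZX (basePtC Θ) = 0)
    (hid : ∀ᶠ q in 𝓝 (basePtC Θ),
      q.2.1 = Θ (q.1, ZX q) ∧ ∀ k : Fin n, q.2.2 k = pdZ k Θ (q.1, ZX q)) :
    -- (a) symmetry
    (∀ k₁ k₂ : Fin n, ∀ᶠ q in 𝓝 (basePtC Θ),
      PhiFun Θ ZX k₁ k₂ q = PhiFun Θ ZX k₂ k₁ q) ∧
    -- (b) every Segre variety is a solution graph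
    (∀ᶠ p in 𝓝 (0 : Pt n), ∀ k₁ k₂ : Fin n,
      pdZ k₂ (pdZ k₁ Θ) p =
        PhiFun Θ ZX k₁ k₂ (p.1, Θ p, fun k => pdZ k Θ p)) :=
  segre_varieties_solve_associated_system_general Θ hΘ ZX hZX hZX0 hid
end
end
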